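/- Every submodule of a finitely generated free Z[ε]-module (a torsionless Z[ε]-module) is a Gorenstein-projective Z[ε]-module, and conversely every finitely generated Gorenstein-projective Z[ε]-module is torsionless. Thus G-proj Z[ε] = sub(Z[ε]). -/

import Mathlib

/-!
A Gorenstein-projective module is a submodule of the finitely generated projective module `P⁰`,
hence of a finitely generated free module.

Conversely, a torsionless `ℤ[ε]`-module `M` is a finitely generated torsion-free abelian group,
hence has a `ℤ`-basis, in which `ε` acts by an integer matrix `E` with `E² = 0`. For `v = a + ε b`
in `ℤ[ε]ᵐ` we have `(ε - E) v = -E a + ε (a - E b)`, so `v ∈ ker (ε - E)` iff `a = E b`, iff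
`v = (ε + E) b`. Hence `⋯ → ℤ[ε]ᵐ --(ε + E)--> ℤ[ε]ᵐ --(ε - E)--> ℤ[ε]ᵐ → ⋯` is exact, its dual
is the same complex for `Eᵀ`, and `x ↦ [ε x] + ε [x]`, with `[·]` the coordinate vector,
identifies `M` with `ker (ε - E)`.
-/

/-- A finitely generated `R`-module `M` is Gorenstein-projective if it is the kernel of
`d⁰` in a doubly infinite exact sequence of finitely generated projective `R`-modules
whose `R`-dual is also exact. -/
def IsGorensteinProjective (R : Type) [CommRing R] (M : Type*) [AddCommGroup M]
    [Module R M] : Prop :=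
  ∃ (P : ℤ → ModuleCat.{0} R) (d : ∀ i : ℤ, P i →ₗ[R] P (i + 1)),
    (∀ i, Module.Finite R (P i)) ∧ (∀ i, Module.Projective R (P i)) ∧
    (∀ i, Function.Exact (d i) (d (i + 1))) ∧
    (∀ i, Function.Exact (d (i + 1)).dualMap (d i).dualMap) ∧
    Nonempty (M ≃ₗ[R] LinearMap.ker (d 0))

open Matrix TrivSqZeroExt DualNumber

namespace Matrix

section Dual

variable {R : Type*} [CommSemiring R] {m n p : Type*} [Fintype m] [Fintype n] [Fintype p]
  [DecidableEq m] [DecidableEq n] [DecidableEq p]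

lemma dualMap_toLin'_comp_dotProductEquiv (N : Matrix m n R) :
    (toLin' N).dualMap ∘ₗ (dotProductEquiv R m).toLinearMap =
      (dotProductEquiv R n).toLinearMap ∘ₗ toLin' Nᵀ := by
  ext v w
  simp

lemma exact_dualMap_toLin'_iff (N : Matrix m n R) (N' : Matrix p m R) :
    Function.Exact (toLin' N').dualMap (toLin' N).dualMap ↔
      Function.Exact (toLin' N'ᵀ) (toLin' Nᵀ) :=
  Function.Exact.iff_of_ladder_linearEquiv (dualMap_toLin'_comp_dotProductEquiv N')
    (dualMap_toLin'_comp_dotProductEquiv N)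

end Dual

variable {k ι : Type*} [CommRing k] [Fintype ι] [DecidableEq ι]

def addEps (E : Matrix ι ι k) : Matrix ι ι k[ε] := E.map inl + (ε : k[ε]) • 1

/-- The differential in degree `i` is `ε + (-1)^(i+1) E`, so that `d 0 = ε - E`. -/
def periodicDiff (E : Matrix ι ι k) (i : ℤ) : (ι → k[ε]) →ₗ[k[ε]] (ι → k[ε]) :=
  toLin' (((i + 1).negOnePow : ℤ) • E).addEps

section

variable (E : Matrix ι ι k)

lemma fst_addEps_mulVec (v : ι → k[ε]) : fst ∘ (E.addEps *ᵥ v) = E *ᵥ (fst ∘ v) := by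
  ext i
  simp [addEps, add_mulVec, smul_mulVec, mulVec, dotProduct, fst_sum]

lemma snd_addEps_mulVec (v : ι → k[ε]) :
    snd ∘ (E.addEps *ᵥ v) = fst ∘ v + E *ᵥ (snd ∘ v) := by
  ext i
  simp [addEps, add_mulVec, smul_mulVec, mulVec, dotProduct, snd_sum, add_comm]

omit [Fintype ι] in
lemma addEps_transpose : E.addEpsᵀ = Eᵀ.addEps := by
  simp [addEps, transpose_map]

lemma periodicDiff_zero : periodicDiff E 0 = toLin' (-E).addEps := by
  simp [periodicDiff]

lemma periodicDiff_add_one (i : ℤ) :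
    periodicDiff E (i + 1) = toLin' (-(((i + 1).negOnePow : ℤ) • E)).addEps := by
  simp [periodicDiff, Int.negOnePow_succ, neg_smul]

end

variable {E : Matrix ι ι k}

lemma addEps_neg_mulVec_eq_zero_iff (hE : E * E = 0) {v : ι → k[ε]} :
    (-E).addEps *ᵥ v = 0 ↔ fst ∘ v = E *ᵥ (snd ∘ v) := by
  have hfst := fst_addEps_mulVec (-E) v
  have hsnd := snd_addEps_mulVec (-E) v
  constructor
  · intro h
    rw [h, neg_mulVec, ← sub_eq_add_neg] at hsnd
    exact sub_eq_zero.mp hsnd.symm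
  · intro h
    ext i
    · simpa [h, mulVec_mulVec, hE] using congrFun hfst i
    · simpa [h, neg_mulVec] using congrFun hsnd i

theorem exact_toLin'_addEps (hE : E * E = 0) :
    Function.Exact (toLin' E.addEps) (toLin' (-E).addEps) := by
  intro v
  rw [toLin'_apply, addEps_neg_mulVec_eq_zero_iff hE]
  constructor
  · intro h
    refine ⟨inl ∘ snd ∘ v, ?_⟩
    ext i
    · exact (congrFun (fst_addEps_mulVec E _) i).trans (congrFun h i).symm
    · simpa [Function.comp_def, ← Pi.zero_def] using
        congrFun (snd_addEps_mulVec E (inl ∘ snd ∘ v)) i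
  · rintro ⟨w, rfl⟩
    rw [toLin'_apply, fst_addEps_mulVec, snd_addEps_mulVec, mulVec_add, mulVec_mulVec, hE,
      zero_mulVec, add_zero]

theorem exact_toLin'_neg_addEps (hE : E * E = 0) :
    Function.Exact (toLin' (-E).addEps) (toLin' E.addEps) := by
  simpa only [neg_neg] using exact_toLin'_addEps (E := -E) (by rwa [neg_mul_neg])

lemma exact_periodicDiff (hE : E * E = 0) (i : ℤ) :
    Function.Exact (periodicDiff E i) (periodicDiff E (i + 1)) := by
  rw [periodicDiff_add_one]
  exact exact_toLin'_addEps (by rw [smul_mul_smul_comm, hE, smul_zero])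

lemma exact_dualMap_periodicDiff (hE : E * E = 0) (i : ℤ) :
    Function.Exact (periodicDiff E (i + 1)).dualMap (periodicDiff E i).dualMap := by
  rw [periodicDiff_add_one, periodicDiff, exact_dualMap_toLin'_iff, addEps_transpose,
    addEps_transpose, transpose_neg]
  exact exact_toLin'_neg_addEps
    (by rw [← transpose_mul, smul_mul_smul_comm, hE, smul_zero, transpose_zero])

end Matrix

namespace IsGorensteinProjective

variable {R : Type} [CommRing R] {M : Type*} [AddCommGroup M] [Module R M]

theorem of_linearEquiv {N : Type*} [AddCommGroup N] [Module R N] (e : M ≃ₗ[R] N)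
    (h : IsGorensteinProjective R N) : IsGorensteinProjective R M :=
  let ⟨P, d, hfin, hproj, hexact, hdual, ⟨e'⟩⟩ := h
  ⟨P, d, hfin, hproj, hexact, hdual, ⟨e.trans e'⟩⟩

theorem exists_injective (h : IsGorensteinProjective R M) :
    ∃ (n : ℕ) (f : M →ₗ[R] (Fin n → R)), Function.Injective f := by
  obtain ⟨P, d, hfin, hproj, -, -, ⟨e⟩⟩ := h
  have := hfin 0
  have := hproj 0
  obtain ⟨n, -, g, -, hg, -⟩ := Module.Finite.exists_comp_eq_id_of_projective R (P 0)
  exact ⟨n, g ∘ₗ (LinearMap.ker (d 0)).subtype ∘ₗ e.toLinearMap,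
    hg.comp (Subtype.val_injective.comp e.injective)⟩

end IsGorensteinProjective

theorem Matrix.isGorensteinProjective_ker_toLin'_neg_addEps {k ι : Type} [CommRing k]
    [Fintype ι] [DecidableEq ι] {E : Matrix ι ι k} (hE : E * E = 0) :
    IsGorensteinProjective k[ε] (LinearMap.ker (toLin' (-E).addEps)) :=
  ⟨fun _ => ModuleCat.of k[ε] (ι → k[ε]), periodicDiff E,
    fun _ => inferInstanceAs (Module.Finite k[ε] (ι → k[ε])),
    fun _ => inferInstanceAs (Module.Projective k[ε] (ι → k[ε])),
    exact_periodicDiff hE, exact_dualMap_periodicDiff hE,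
    ⟨LinearEquiv.ofEq _ _ (by rw [periodicDiff_zero])⟩⟩

namespace DualNumber

variable {k : Type*} [CommRing k] {M : Type*} [AddCommGroup M] [Module k[ε] M] [Module k M]
  [IsScalarTower k k[ε] M]

lemma eps_smul_smul (r : k[ε]) (x : M) : (ε : k[ε]) • r • x = r.fst • (ε : k[ε]) • x := by
  rw [smul_smul, ← smul_assoc]
  congr 1
  ext <;> simp

lemma smul_eq_fst_smul_add_snd_smul_eps_smul (r : k[ε]) (x : M) :
    r • x = r.fst • x + r.snd • (ε : k[ε]) • x := by
  conv_lhs => rw [← inl_fst_add_inr_snd_eq r]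
  rw [add_smul, inr_eq_smul_eps, smul_assoc, ← algebraMap_eq_inl, algebraMap_smul]

end DualNumber

namespace Module.Basis

variable {k : Type*} [CommRing k] {M : Type*} [AddCommGroup M] [Module k[ε] M] [Module k M]
  [IsScalarTower k k[ε] M] {ι : Type*} (b : Basis ι k M)

noncomputable def dualNumberRepr : M →ₗ[k[ε]] (ι → k[ε]) where
  toFun x i := inl (b.repr ((ε : k[ε]) • x) i) + inr (b.repr x i)
  map_add' x y := by ext i <;> simp
  map_smul' r x := by
    ext i
    · simp [eps_smul_smul]
    · conv_lhs => rw [smul_eq_fst_smul_add_snd_smul_eps_smul r x]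
      simp [mul_comm]

@[simp] lemma fst_dualNumberRepr (x : M) (i : ι) :
    (b.dualNumberRepr x i).fst = b.repr ((ε : k[ε]) • x) i := by
  simp [dualNumberRepr]

@[simp] lemma snd_dualNumberRepr (x : M) (i : ι) : (b.dualNumberRepr x i).snd = b.repr x i := by
  simp [dualNumberRepr]

lemma dualNumberRepr_injective : Function.Injective b.dualNumberRepr := fun x y h =>
  b.repr.injective <| Finsupp.ext fun i => by
    simpa using congrArg (fun v : ι → k[ε] => (v i).snd) h

variable [Fintype ι] [DecidableEq ι]

noncomputable def epsMatrix : Matrix ι ι k :=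
  LinearMap.toMatrix b b (DistribSMul.toLinearMap k M (ε : k[ε]))

lemma epsMatrix_mulVec_repr (x : M) : b.epsMatrix *ᵥ b.repr x = b.repr ((ε : k[ε]) • x) :=
  LinearMap.toMatrix_mulVec_repr b b _ x

lemma epsMatrix_mul_self : b.epsMatrix * b.epsMatrix = 0 := by
  rw [epsMatrix, ← LinearMap.toMatrix_mul, ← map_zero (LinearMap.toMatrix b b)]
  congr 1
  ext x
  simp [smul_smul]

lemma range_dualNumberRepr :
    LinearMap.range b.dualNumberRepr = LinearMap.ker (toLin' (-b.epsMatrix).addEps) := by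
  ext v
  rw [LinearMap.mem_range, LinearMap.mem_ker, toLin'_apply,
    addEps_neg_mulVec_eq_zero_iff b.epsMatrix_mul_self]
  constructor
  · rintro ⟨x, rfl⟩
    ext i
    simp [Function.comp_def, ← b.epsMatrix_mulVec_repr]
  · intro h
    obtain ⟨x, hx⟩ : ∃ x, ⇑(b.repr x) = snd ∘ v := ⟨b.equivFun.symm (snd ∘ v), by
      rw [← b.equivFun_apply, LinearEquiv.apply_symm_apply]⟩
    refine ⟨x, funext fun i => TrivSqZeroExt.ext ?_ ?_⟩
    · rw [fst_dualNumberRepr, ← b.epsMatrix_mulVec_repr, hx, ← h]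
      rfl
    · rw [snd_dualNumberRepr, hx]
      rfl

end Module.Basis

theorem Module.Basis.isGorensteinProjective {k ι : Type} [CommRing k] [Fintype ι]
    [DecidableEq ι] {M : Type*} [AddCommGroup M] [Module k[ε] M] [Module k M]
    [IsScalarTower k k[ε] M] (b : Basis ι k M) : IsGorensteinProjective k[ε] M :=
  (isGorensteinProjective_ker_toLin'_neg_addEps b.epsMatrix_mul_self).of_linearEquiv <|
    (LinearEquiv.ofInjective _ b.dualNumberRepr_injective).trans
      (LinearEquiv.ofEq _ _ b.range_dualNumberRepr)

theorem stmt4 (M : Type) [AddCommGroup M] [Module (DualNumber ℤ) M]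
    [Module.Finite (DualNumber ℤ) M] :
    IsGorensteinProjective (DualNumber ℤ) M ↔
      ∃ (n : ℕ) (f : M →ₗ[DualNumber ℤ] (Fin n → DualNumber ℤ)),
        Function.Injective f := by
  refine ⟨IsGorensteinProjective.exists_injective, fun ⟨n, f, hf⟩ => ?_⟩
  have : Module.Free ℤ ℤ[ε] := inferInstanceAs (Module.Free ℤ (ℤ × ℤ))
  have : Module.Finite ℤ ℤ[ε] := inferInstanceAs (Module.Finite ℤ (ℤ × ℤ))
  have : Module.Finite ℤ M := .trans ℤ[ε] M
  have : Module.IsTorsionFree ℤ M := hf.moduleIsTorsionFree f (map_zsmul f)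
  exact (Module.Free.chooseBasis ℤ M).isGorensteinProjective
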